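/- arXiv:1801.09203 — 7 statements merged into one kernel-verified Lean document; each statement's English description precedes it below -/
import Mathlib

section
/- Let F be the involutive monoid morphism on words over the 4-letter alphabet {a,b,α,β} defined by F(a)=α, F(α)=a, F(b)=β, F(β)=b. If z and p are nonempty words satisfying zp = F(p)F(z), then there exists a nonempty word x and natural numbers i, j such that z = x(F(x)x)^i and p = (F(x)x)^j F(x). -/
inductive Letter | a | b | α | β

/-- The letter involution a ↔ α, b ↔ β. -/
def swapL : Letter → Letter
  | Letter.a => Letter.α
  | Letter.α => Letter.a
  | Letter.b => Letter.β
  | Letter.β => Letter.b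

/-- The involutive monoid morphism F extended letterwise to words. -/
def F : FreeMonoid Letter →* FreeMonoid Letter := FreeMonoid.map swapL

/-
Cancelling the shorter prefix turns a solution of `u v = F(v) F(u)` into a shorter solution of the
twisted conjugacy equation `t w = w F(t)`, and a solution of the latter into a shorter solution of
either equation. Well-founded recursion on the total length of the twisted equation (with the
first equation as an intermediate step) yields the normal forms; the recursion stops at
`u = F(v)`, i.e. `x = u`.
-/

namespace FreeMonoid

variable {α : Type*}

theorem exists_eq_mul_of_mul_eq_mul {u v u' v' : FreeMonoid α} (h : u * v = u' * v')
    (hl : u.length ≤ u'.length) : ∃ t, u' = u * t ∧ v = t * v' := by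
  rcases List.append_eq_append_iff.mp (congrArg toList h) with ⟨t, hu', hv⟩ | ⟨t, hu, hv'⟩
  · exact ⟨ofList t, hu', hv⟩
  · have ht : t = [] := List.eq_nil_of_length_eq_zero <| by
      have := congrArg List.length hu
      simp only [List.length_append] at this
      change (toList u).length ≤ (toList u').length at hl
      omega
    subst ht
    exact ⟨1, by simpa using hu.symm, by simpa using hv'.symm⟩

end FreeMonoid

open FreeMonoid

theorem swapL_involutive : Function.Involutive swapL := by
  intro c
  cases c <;> rfl

@[simp]
theorem F_F (w : FreeMonoid Letter) : F (F w) = w := by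
  simp only [F, map_map, swapL_involutive.comp_self, map_id, MonoidHom.id_apply]

@[simp]
theorem length_F (w : FreeMonoid Letter) : (F w).length = w.length :=
  List.length_map _

theorem eq_one_of_F_eq_self {w : FreeMonoid Letter} (h : F w = w) : w = 1 := by
  cases hw : toList w with
  | nil => exact toList.injective hw
  | cons c l =>
    have hc : swapL c = c := by
      simpa [F, toList_map, hw] using congrArg (fun w => (toList w).head?) h
    cases c <;> simp [swapL] at hc

theorem F_pow_mul_F (x : FreeMonoid Letter) (j : ℕ) :
    F ((F x * x) ^ j * F x) = x * (F x * x) ^ j := by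
  simp only [map_mul, map_pow, F_F, mul_pow_mul]

theorem eq_of_mul_eq_F_mul_F_of_forall {u v : FreeMonoid Letter} (hu : u ≠ 1)
    (h : u * v = F v * F u)
    (ih : ∀ t w : FreeMonoid Letter, t ≠ 1 → t * w = w * F t →
      t.length + w.length < u.length + v.length →
      ∃ x : FreeMonoid Letter, x ≠ 1 ∧ ∃ d j : ℕ,
        t = (F x * x) ^ d ∧ w = (F x * x) ^ j * F x) :
    ∃ x : FreeMonoid Letter, x ≠ 1 ∧ ∃ i j : ℕ,
      u = x * (F x * x) ^ i ∧ v = (F x * x) ^ j * F x := by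
  have hu₀ : u.length ≠ 0 := mt length_eq_zero.mp hu
  rcases le_or_gt v.length u.length with hle | hlt
  · obtain ⟨t, hu', hFu⟩ := exists_eq_mul_of_mul_eq_mul h.symm (by rwa [length_F])
    rcases eq_or_ne t 1 with rfl | ht
    · exact ⟨u, hu, 0, 0, by simp, by rw [mul_one] at hu'; simp [hu']⟩
    have hv : v ≠ 1 := by
      rintro rfl
      exact hu (eq_one_of_F_eq_self (by simpa using h.symm))
    have hlen : t.length + v.length < u.length + v.length := by
      have := mt length_eq_zero.mp hv
      simp only [hu', length_mul, length_F]; omega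
    obtain ⟨x, hx, d, j, rfl, rfl⟩ := ih t v ht (by rw [← hFu, hu', map_mul, F_F]) hlen
    exact ⟨x, hx, j + d, j, by rw [hu', F_pow_mul_F, mul_assoc, ← pow_add], rfl⟩
  · obtain ⟨t, hFv, hv⟩ := exists_eq_mul_of_mul_eq_mul h (by rw [length_F]; exact hlt.le)
    have ht : t ≠ 1 := by
      rintro rfl
      rw [mul_one] at hFv
      exact hlt.ne' (by simpa using congrArg length hFv)
    have hlen : t.length + (F u).length < u.length + v.length := by
      have := congrArg length hFv
      simp only [length_mul, length_F] at this ⊢; omega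
    obtain ⟨x, hx, d, j, rfl, hFu⟩ := ih t (F u) ht (by rw [← hv, ← F_F v, hFv, map_mul]) hlen
    exact ⟨x, hx, j, d + j, by rw [← F_F u, hFu, F_pow_mul_F],
      by rw [hv, hFu, ← mul_assoc, ← pow_add]⟩

theorem eq_pow_of_mul_eq_mul_F {u v : FreeMonoid Letter} (hu : u ≠ 1) (h : u * v = v * F u) :
    ∃ x : FreeMonoid Letter, x ≠ 1 ∧ ∃ d j : ℕ,
      u = (F x * x) ^ d ∧ v = (F x * x) ^ j * F x := by
  have hu₀ : u.length ≠ 0 := mt length_eq_zero.mp hu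
  rcases le_or_gt u.length v.length with hle | hlt
  · obtain ⟨t, hv, hv'⟩ := exists_eq_mul_of_mul_eq_mul h hle
    have hlen : u.length + t.length < u.length + v.length := by
      simp only [hv, length_mul]; omega
    obtain ⟨x, hx, d, j, rfl, rfl⟩ := eq_pow_of_mul_eq_mul_F hu (hv.symm.trans hv')
    exact ⟨x, hx, d, d + j, rfl, by rw [hv, ← mul_assoc, ← pow_add]⟩
  · obtain ⟨t, hu', hFu⟩ := exists_eq_mul_of_mul_eq_mul h.symm hlt.le
    have hv : v ≠ 1 := by
      rintro rfl
      exact hu (eq_one_of_F_eq_self (by simpa using h.symm))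
    have ht : t ≠ 1 := by
      rintro rfl
      rw [mul_one] at hu'
      exact hlt.ne (congrArg length hu').symm
    have hlen : t.length + v.length < u.length + v.length := by
      have := mt length_eq_zero.mp hv
      simp only [hu', length_mul]; omega
    obtain ⟨x, hx, i, j, rfl, rfl⟩ :=
      eq_of_mul_eq_F_mul_F_of_forall ht (by rw [← hFu, hu', map_mul])
        fun t' w ht' h' hshorter => eq_pow_of_mul_eq_mul_F ht' h'
    exact ⟨x, hx, j + 1 + i, j, by rw [hu', pow_add, pow_add, pow_one]; simp only [mul_assoc],
      rfl⟩
termination_by u.length + v.length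

theorem word_equation_F_one_general (z p : FreeMonoid Letter) (hz : z ≠ 1)
    (h : z * p = F p * F z) :
    ∃ x : FreeMonoid Letter, x ≠ 1 ∧ ∃ i j : ℕ,
      z = x * (F x * x) ^ i ∧ p = (F x * x) ^ j * F x :=
  eq_of_mul_eq_F_mul_F_of_forall hz h fun _ _ ht h' _ => eq_pow_of_mul_eq_mul_F ht h'

/-- Solutions of the word equation z p = F(p) F(z). -/
theorem word_equation_F_one (z p : FreeMonoid Letter) (hz : z ≠ 1) (hp : p ≠ 1)
    (h : z * p = F p * F z) :
    ∃ x : FreeMonoid Letter, x ≠ 1 ∧ ∃ i j : ℕ,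
      z = x * (F x * x) ^ i ∧ p = (F x * x) ^ j * F x :=
  word_equation_F_one_general z p hz h
end

section
/- For every natural number k, the compositions of elementary Sturmian morphisms satisfy φ_α ∘ φ_a^k ∘ φ_β = φ_β ∘ φ_b^k ∘ φ_α as morphisms on binary words. -/
/-- φ_a : 0 ↦ 0, 1 ↦ 10. -/
def φa : Monoid.End (FreeMonoid Bool) :=
  FreeMonoid.lift fun x => if x then FreeMonoid.of true * FreeMonoid.of false else FreeMonoid.of false

/-- φ_b : 0 ↦ 0, 1 ↦ 01. -/
def φb : Monoid.End (FreeMonoid Bool) :=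
  FreeMonoid.lift fun x => if x then FreeMonoid.of false * FreeMonoid.of true else FreeMonoid.of false

/-- φ_α : 0 ↦ 01, 1 ↦ 1. -/
def φα : Monoid.End (FreeMonoid Bool) :=
  FreeMonoid.lift fun x => if x then FreeMonoid.of true else FreeMonoid.of false * FreeMonoid.of true

/-- φ_β : 0 ↦ 10, 1 ↦ 1. -/
def φβ : Monoid.End (FreeMonoid Bool) :=
  FreeMonoid.lift fun x => if x then FreeMonoid.of true else FreeMonoid.of true * FreeMonoid.of false

/-- The exchange morphism E : 0 ↦ 1, 1 ↦ 0. -/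
def Eend : Monoid.End (FreeMonoid Bool) := FreeMonoid.map not

/-! On a letter the two sides read `φα (φa^k 1) = 1 (01)^k` and `φβ (φb^k 1) = (10)^k 1`, and on
`0` they read `1 (01)^(k+1)` and `(10)^(k+1) 1`; both equalities are the conjugation
`x (y x)^n = (x y)^n x`. -/

namespace Monoid.End

variable {M : Type*} [Monoid M] (f : Monoid.End M) {a b : M}

lemma pow_apply_of_apply_eq (ha : f a = a) (k : ℕ) : (f ^ k) a = a := by
  rw [coe_pow]
  exact Function.iterate_fixed ha k

lemma pow_apply_of_apply_eq_mul_right (hb : f b = b) (ha : f a = a * b) (k : ℕ) :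
    (f ^ k) a = a * b ^ k := by
  induction k with
  | zero => simp
  | succ k ih =>
    rw [pow_succ, coe_mul, Function.comp_apply, ha, map_mul, ih, pow_apply_of_apply_eq f hb,
      mul_assoc, ← pow_succ]

lemma pow_apply_of_apply_eq_mul_left (hb : f b = b) (ha : f a = b * a) (k : ℕ) :
    (f ^ k) a = b ^ k * a := by
  induction k with
  | zero => simp
  | succ k ih =>
    rw [pow_succ, coe_mul, Function.comp_apply, ha, map_mul, ih, pow_apply_of_apply_eq f hb,
      ← mul_assoc, ← pow_succ']

end Monoid.End

open FreeMonoid Monoid.End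

lemma φa_pow_of_false (k : ℕ) : (φa ^ k) (of false) = of false :=
  pow_apply_of_apply_eq φa rfl k

lemma φb_pow_of_false (k : ℕ) : (φb ^ k) (of false) = of false :=
  pow_apply_of_apply_eq φb rfl k

lemma φa_pow_of_true (k : ℕ) : (φa ^ k) (of true) = of true * of false ^ k :=
  pow_apply_of_apply_eq_mul_right φa rfl rfl k

lemma φb_pow_of_true (k : ℕ) : (φb ^ k) (of true) = of false ^ k * of true :=
  pow_apply_of_apply_eq_mul_left φb rfl rfl k

/-- φ_α ∘ φ_a^k ∘ φ_β = φ_β ∘ φ_b^k ∘ φ_α (multiplication in `Monoid.End` is composition). -/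
theorem sturmian_relation_greek (k : ℕ) : φα * φa ^ k * φβ = φβ * φb ^ k * φα := by
  refine FreeMonoid.hom_eq fun x => ?_
  change φα ((φa ^ k) (φβ (of x))) = φβ ((φb ^ k) (φα (of x)))
  cases x
  · change φα ((φa ^ k) (of true * of false)) = φβ ((φb ^ k) (of false * of true))
    simp only [map_mul, map_pow, φa_pow_of_true, φa_pow_of_false, φb_pow_of_true,
      φb_pow_of_false]
    rw [mul_assoc, ← pow_succ, ← mul_assoc, ← pow_succ']
    exact (mul_pow_mul (of true) (of false) (k + 1)).symm
  · change φα ((φa ^ k) (of true)) = φβ ((φb ^ k) (of true))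
    simp only [map_mul, map_pow, φa_pow_of_true, φb_pow_of_true]
    exact (mul_pow_mul (of true) (of false) k).symm
end

section
/- Let u be an infinite binary word that is the image under φ_b of some infinite binary word u'. If p0 is a factor of u where the first letter of p is 0, then there exists a unique factor p' of u' such that p0 = φ_b(p')0. -/
/-- φ_b on finite binary words as lists: 0 ↦ 0, 1 ↦ 01 (with 0 = false, 1 = true). -/
def phiBL (l : List Bool) : List Bool :=
  (l.map fun x => if x then [false, true] else [false]).flatten

/-- `Occ w u i` : the finite word `w` occurs in the infinite word `u` at index `i`. -/
def Occ (w : List Bool) (u : ℕ → Bool) (i : ℕ) : Prop :=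
  ∀ k, k < w.length → w.getD k false = u (i + k)

/-- `PhibImage u u'` : the infinite word `u` is the image of `u'` under φ_b,
i.e. every φ_b-image of a prefix of `u'` is a prefix of `u`. -/
def PhibImage (u u' : ℕ → Bool) : Prop :=
  ∀ n k, k < (phiBL ((List.range n).map u')).length →
    (phiBL ((List.range n).map u')).getD k false = u k

lemma phiBL_append (a b : List Bool) : phiBL (a ++ b) = phiBL a ++ phiBL b := by
  simp [phiBL]

lemma phiBL_cons (a : Bool) (l : List Bool) :
    phiBL (a :: l) = (if a then [false, true] else [false]) ++ phiBL l := by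
  simp [phiBL]

lemma phiBL_ne_true_cons (l t : List Bool) : phiBL l ≠ true :: t := by
  cases l with
  | nil => simp [phiBL]
  | cons a l => cases a <;> simp [phiBL_cons]

lemma phiBL_inj : ∀ {l m : List Bool}, phiBL l = phiBL m → l = m := by
  intro l
  induction l with
  | nil =>
    intro m hm
    cases m with
    | nil => rfl
    | cons b m => cases b <;> simp [phiBL, phiBL_cons] at hm
  | cons a l ih =>
    intro m hm
    cases m with
    | nil => cases a <;> simp [phiBL, phiBL_cons] at hm
    | cons b m =>
      cases a <;> cases b <;> simp [phiBL_cons] at hm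
      · rw [ih hm]
      · exact absurd hm (phiBL_ne_true_cons l _)
      · exact absurd hm.symm (phiBL_ne_true_cons m _)
      · rw [ih hm]

/-- Length of φ_b of the prefix of length `n` of `u'`. -/
def FB (u' : ℕ → Bool) (n : ℕ) : ℕ := (phiBL ((List.range n).map u')).length

lemma phiBL_range_succ (u' : ℕ → Bool) (m : ℕ) :
    phiBL ((List.range (m+1)).map u') =
      phiBL ((List.range m).map u') ++ (if u' m then [false, true] else [false]) := by
  rw [List.range_succ, List.map_append, phiBL_append]
  simp [phiBL]

lemma FB_succ (u' : ℕ → Bool) (n : ℕ) :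
    FB u' (n+1) = FB u' n + (if u' n then 2 else 1) := by
  unfold FB
  rw [phiBL_range_succ, List.length_append]
  cases u' n <;> simp

lemma FB_strictMono (u' : ℕ → Bool) : StrictMono (FB u') := by
  apply strictMono_nat_of_lt_succ
  intro n
  rw [FB_succ]
  cases u' n <;> simp

lemma u_FB {u u' : ℕ → Bool} (h : PhibImage u u') (m : ℕ) : u (FB u' m) = false := by
  have hlt : FB u' m < FB u' (m+1) := FB_strictMono u' (Nat.lt_succ_self m)
  have h1 := h (m+1) (FB u' m) hlt
  rw [phiBL_range_succ] at h1
  unfold FB at h1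
  rw [List.getD_append_right _ _ _ _ (Nat.le_refl _)] at h1
  unfold FB
  rw [← h1]
  cases u' m <;> simp

lemma u_FB_true {u u' : ℕ → Bool} (h : PhibImage u u') (m : ℕ) (hm : u' m = true) :
    u (FB u' m + 1) = true := by
  have hlt : FB u' m + 1 < FB u' (m+1) := by rw [FB_succ, hm]; simp
  have h1 := h (m+1) (FB u' m + 1) hlt
  rw [phiBL_range_succ] at h1
  unfold FB at h1
  rw [List.getD_append_right _ _ _ _ (Nat.le_succ _)] at h1
  unfold FB
  rw [← h1, hm]
  simp

lemma exists_FB {u u' : ℕ → Bool} (h : PhibImage u u') {k : ℕ} (hk : u k = false) :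
    ∃ m, FB u' m = k := by
  set P : ℕ → Prop := fun m => FB u' m ≤ k with hP
  have hP0 : P 0 := by simp [P, FB, phiBL]
  set m := Nat.findGreatest P (k+1) with hm
  have hPm : P m := Nat.findGreatest_spec (Nat.zero_le _) hP0
  have hmk : m ≤ k := le_trans ((FB_strictMono u').le_apply) hPm
  have hnot : ¬ P (m+1) := by
    apply Nat.findGreatest_is_greatest (Nat.lt_succ_self m)
    omega
  have hlt : k < FB u' (m+1) := by omega
  rw [FB_succ] at hlt
  cases hum : u' m with
  | false =>
    rw [hum] at hlt; simp at hlt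
    exact ⟨m, by omega⟩
  | true =>
    rw [hum] at hlt; simp at hlt
    rcases Nat.lt_or_ge k (FB u' m + 1) with h1 | h1
    · exact ⟨m, by omega⟩
    · exfalso
      have : k = FB u' m + 1 := by omega
      rw [this, u_FB_true h m hum] at hk
      simp at hk

lemma occ_phiBL_range' {u u' : ℕ → Bool} (h : PhibImage u u') (m d : ℕ) :
    ∀ k, k < (phiBL ((List.range' m d).map u')).length →
      (phiBL ((List.range' m d).map u')).getD k false = u (FB u' m + k) := by
  intro k hk
  have hsplit : phiBL ((List.range (m+d)).map u') =
      phiBL ((List.range m).map u') ++ phiBL ((List.range' m d).map u') := by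
    rw [List.range_add, List.map_append, phiBL_append, List.range'_eq_map_range]
  have key := h (m+d) (FB u' m + k) (by
    show FB u' m + k < (phiBL ((List.range (m+d)).map u')).length
    rw [hsplit, List.length_append]
    unfold FB
    omega)
  rw [hsplit] at key
  unfold FB at key ⊢
  rw [List.getD_append_right _ _ _ _ (Nat.le_add_right _ _), Nat.add_sub_cancel_left] at key
  exact key

/-- If `u = φ_b(u')` and `p0` is a factor of `u` whose first letter is `0`, then there
is a unique factor `p'` of `u'` with `p0 = φ_b(p')0`. -/
theorem unique_preimage_under_phib (u u' : ℕ → Bool) (h : PhibImage u u')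
    (p : List Bool) (hp : p ≠ []) (hhead : p.head? = some false)
    (hfac : ∃ i, Occ (p ++ [false]) u i) :
    ∃! p' : List Bool, (∃ i, Occ p' u' i) ∧ p ++ [false] = phiBL p' ++ [false] := by
  obtain ⟨i, hocc⟩ := hfac
  have hplen : 0 < p.length := List.length_pos_iff.mpr hp
  have hp0 : p.getD 0 false = false := by
    cases p with
    | nil => exact absurd rfl hp
    | cons a q => simp at hhead; simp [hhead]
  have hu_i : u i = false := by
    have h0 := hocc 0 (by simp)
    rw [List.getD_append _ _ _ _ hplen, hp0] at h0
    simpa using h0.symm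
  have hu_end : u (i + p.length) = false := by
    have h0 := hocc p.length (by simp)
    rw [List.getD_append_right _ _ _ _ (Nat.le_refl _)] at h0
    simp at h0
    exact h0
  obtain ⟨m, hm⟩ := exists_FB h hu_i
  obtain ⟨m', hm'⟩ := exists_FB h hu_end
  have hmm' : m ≤ m' := by
    have hle : FB u' m ≤ FB u' m' := by omega
    exact (FB_strictMono u').le_iff_le.mp hle
  set d := m' - m with hd
  set p' := (List.range' m d).map u' with hp'
  have hmd : m + d = m' := by omega
  have hsplit : phiBL ((List.range m').map u') =
      phiBL ((List.range m).map u') ++ phiBL p' := by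
    rw [hp', List.range'_eq_map_range, ← hmd, List.range_add, List.map_append, phiBL_append]
  have hlen : (phiBL p').length = p.length := by
    have hfb : FB u' m' = FB u' m + (phiBL p').length := by
      unfold FB; rw [hsplit, List.length_append]
    omega
  have hocc' := occ_phiBL_range' h m d
  rw [← hp', hm] at hocc'
  have hpeq : p = phiBL p' := by
    apply List.ext_getElem (by omega)
    intro k h1 h2
    have e1 := hocc k (by simp; omega)
    rw [List.getD_append _ _ _ _ h1, List.getD_eq_getElem _ _ h1] at e1
    have e2 := hocc' k (by omega)
    rw [List.getD_eq_getElem _ _ (by omega)] at e2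
    exact e1.trans e2.symm
  refine ⟨p', ⟨⟨m, ?_⟩, by rw [hpeq]⟩, ?_⟩
  · intro k hk
    have hk' : k < d := by simpa [hp'] using hk
    rw [List.getD_eq_getElem _ _ hk]
    simp [hp', List.getElem_range']
  · rintro q ⟨-, hq⟩
    have hpq : p = phiBL q := by
      have := hq
      simpa using this
    exact phiBL_inj (by rw [← hpq, hpeq])
end

section
/- Let u and u' be infinite binary words with u = φ_b(u'). If w' is a nonempty factor-prefix of u' with exactly two return words r'_0, r'_1 in u', and we set w = φ_b(w')·0, r_0 = φ_b(r'_0), r_1 = φ_b(r'_1), then r_0 and r_1 are exactly the return words to w in u, and the derivated word of u with respect to w equals the derivated word of u' with respect to w' (with the same coding of return words). -/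
/-- `r` is a return word to `w` in `u`: the block of `u` between two consecutive
occurrences of `w`. -/
def IsReturnWord (r w : List Bool) (u : ℕ → Bool) : Prop :=
  ∃ i j, i < j ∧ Occ w u i ∧ Occ w u j ∧ (∀ m, i < m → m < j → ¬ Occ w u m) ∧
    r = (List.range (j - i)).map fun k => u (i + k)

/-- `DerivatedWith u w r0 r1 d` : `d` is the derivated word of `u` with respect to the
prefix `w`, coding the return word `r0` by `false` and `r1` by `true`: the sequence
`o` enumerates all occurrences of `w` in `u` (starting with `0`) and the `n`-th
return block equals `r0` or `r1` according to `d n`. -/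
def DerivatedWith (u : ℕ → Bool) (w r0 r1 : List Bool) (d : ℕ → Bool) : Prop :=
  ∃ o : ℕ → ℕ, o 0 = 0 ∧ StrictMono o ∧ (∀ n, Occ w u (o n)) ∧
    (∀ m, Occ w u m → ∃ n, o n = m) ∧
    ∀ n, ((List.range (o (n + 1) - o n)).map fun k => u (o n + k)) = if d n then r1 else r0

namespace PhibAux

lemma phiBL_append (a b : List Bool) : phiBL (a ++ b) = phiBL a ++ phiBL b := by
  simp [phiBL]

lemma phiBL_cons (a : Bool) (l : List Bool) :
    phiBL (a :: l) = (if a then [false, true] else [false]) ++ phiBL l := by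
  simp [phiBL]

def σf (u' : ℕ → Bool) (i : ℕ) : ℕ := (phiBL ((List.range i).map u')).length

lemma range_map_split (u' : ℕ → Bool) (i n : ℕ) :
    (List.range (i + n)).map u'
      = (List.range i).map u' ++ (List.range n).map (fun t => u' (i + t)) := by
  rw [List.range_add, List.map_append, List.map_map]
  rfl

lemma sigma_add (u' : ℕ → Bool) (i n : ℕ) :
    σf u' (i + n) = σf u' i + (phiBL ((List.range n).map fun t => u' (i + t))).length := by
  unfold σf
  rw [range_map_split, phiBL_append, List.length_append]

lemma block_eq {u u' : ℕ → Bool} (h : PhibImage u u') (i n k : ℕ)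
    (hk : k < (phiBL ((List.range n).map fun t => u' (i + t))).length) :
    (phiBL ((List.range n).map fun t => u' (i + t))).getD k false = u (σf u' i + k) := by
  have hsplit : phiBL ((List.range (i + n)).map u')
      = phiBL ((List.range i).map u') ++ phiBL ((List.range n).map fun t => u' (i + t)) := by
    rw [range_map_split, phiBL_append]
  have hlen : σf u' i + k < (phiBL ((List.range (i + n)).map u')).length := by
    rw [hsplit, List.length_append]
    exact Nat.add_lt_add_left hk _
  have h2 := h (i + n) (σf u' i + k) hlen
  rw [hsplit, List.getD_append_right _ _ _ _ (by simp [σf] : (phiBL ((List.range i).map u')).length ≤ σf u' i + k)] at h2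
  rw [← h2]
  congr 1
  simp [σf]

lemma sigma_zero (u' : ℕ → Bool) : σf u' 0 = 0 := by simp [σf, phiBL]

lemma sigma_succ (u' : ℕ → Bool) (i : ℕ) :
    σf u' (i + 1) = σf u' i + (if u' i then 2 else 1) := by
  rw [sigma_add]
  congr 1
  have h1 : (List.range 1).map (fun t => u' (i + t)) = [u' i] := by rfl
  rw [h1]
  cases hb : u' i <;> simp [phiBL, hb]

lemma sigma_mono (u' : ℕ → Bool) : StrictMono (σf u') := by
  apply strictMono_nat_of_lt_succ
  intro n
  rw [sigma_succ]
  cases u' n <;> simp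

lemma u_sigma {u u' : ℕ → Bool} (h : PhibImage u u') (i : ℕ) : u (σf u' i) = false := by
  have h1 : (List.range 1).map (fun t => u' (i + t)) = [u' i] := by rfl
  have hb := block_eq h i 1 0 (by rw [h1]; cases hc : u' i <;> simp [phiBL, hc])
  rw [h1] at hb
  have : u (σf u' i + 0) = false := by
    rw [← hb]; cases u' i <;> simp [phiBL]
  simpa using this

lemma u_sigma1 {u u' : ℕ → Bool} (h : PhibImage u u') (i : ℕ) : u (σf u' i + 1) = u' i := by
  cases hb : u' i with
  | true =>
    have h1 : (List.range 1).map (fun t => u' (i + t)) = [u' i] := by rfl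
    have hk := block_eq h i 1 1 (by rw [h1, hb]; simp [phiBL])
    rw [h1, hb] at hk
    rw [← hk]; simp [phiBL]
  | false =>
    have hs := sigma_succ u' i
    rw [hb] at hs; simp at hs
    rw [← hs]
    exact u_sigma h (i + 1)

lemma exists_interval (u' : ℕ → Bool) (p : ℕ) :
    ∃ i, σf u' i ≤ p ∧ p < σf u' (i + 1) := by
  induction p with
  | zero =>
    refine ⟨0, le_of_eq (sigma_zero u'), ?_⟩
    rw [sigma_succ, sigma_zero]
    split <;> omega
  | succ p ih =>
    obtain ⟨i, h1, h2⟩ := ih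
    by_cases hc : p + 1 < σf u' (i + 1)
    · exact ⟨i, by omega, hc⟩
    · refine ⟨i + 1, by omega, ?_⟩
      rw [sigma_succ u' (i + 1)]
      split <;> omega

lemma eq_sigma_of_false {u u' : ℕ → Bool} (h : PhibImage u u') {p : ℕ} (hp : u p = false) :
    ∃ i, σf u' i = p := by
  obtain ⟨i, h1, h2⟩ := exists_interval u' p
  rcases eq_or_lt_of_le h1 with he | hl
  · exact ⟨i, he⟩
  · exfalso
    have hstep := sigma_succ u' i
    have hb : u' i = true := by
      by_contra hb
      simp only [Bool.not_eq_true] at hb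
      rw [hb] at hstep; simp at hstep; omega
    have hpi : p = σf u' i + 1 := by rw [hb] at hstep; simp at hstep; omega
    have hu := u_sigma1 h i
    rw [← hpi, hp, hb] at hu
    exact Bool.false_ne_true hu

lemma block_list {u u' : ℕ → Bool} (h : PhibImage u u') (i n : ℕ) :
    (List.range ((phiBL ((List.range n).map fun t => u' (i + t))).length)).map
        (fun k => u (σf u' i + k))
      = phiBL ((List.range n).map fun t => u' (i + t)) := by
  apply List.ext_getElem
  · simp
  · intro k h1 h2
    simp only [List.getElem_map, List.getElem_range]
    rw [← block_eq h i n k h2, List.getD_eq_getElem _ _ h2]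

lemma block_list' {u u' : ℕ → Bool} (h : PhibImage u u') (i j : ℕ) (hij : i ≤ j) :
    (List.range (σf u' j - σf u' i)).map (fun k => u (σf u' i + k))
      = phiBL ((List.range (j - i)).map fun k => u' (i + k)) := by
  have hj : i + (j - i) = j := by omega
  have hs := sigma_add u' i (j - i)
  rw [hj] at hs
  rw [show σf u' j - σf u' i
      = (phiBL ((List.range (j - i)).map fun t => u' (i + t))).length by omega]
  exact block_list h i (j - i)

lemma first_false (v : List Bool) : (phiBL v ++ [false]).getD 0 false = false := by
  cases v with
  | nil => rfl
  | cons a l => cases a <;> simp [phiBL_cons]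

lemma occ_image {u u' : ℕ → Bool} (h : PhibImage u u') {w' : List Bool} {i : ℕ}
    (hocc : Occ w' u' i) : Occ (phiBL w' ++ [false]) u (σf u' i) := by
  have hw : (List.range w'.length).map (fun t => u' (i + t)) = w' := by
    apply List.ext_getElem
    · simp
    · intro k h1 h2
      simp only [List.getElem_map, List.getElem_range]
      rw [← hocc k (by simpa using h2), List.getD_eq_getElem _ _ h2]
  intro k hk
  simp only [List.length_append, List.length_singleton] at hk
  rcases lt_or_ge k (phiBL w').length with hlt | hge
  · rw [List.getD_append _ _ _ _ hlt]
    have hb := block_eq h i w'.length k (by rw [hw]; exact hlt)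
    rw [hw] at hb
    exact hb
  · have hk' : k = (phiBL w').length := by omega
    subst hk'
    rw [List.getD_append_right _ _ _ _ le_rfl]
    simp only [Nat.sub_self, List.getD_cons_zero]
    have hu := u_sigma h (i + w'.length)
    have hs := sigma_add u' i w'.length
    rw [hw] at hs
    rw [← hs]
    exact hu.symm

lemma occ_preimage {u u' : ℕ → Bool} (h : PhibImage u u') : ∀ (w' : List Bool) (i : ℕ),
    Occ (phiBL w' ++ [false]) u (σf u' i) → Occ w' u' i := by
  intro w'
  induction w' with
  | nil => intro i _ k hk; simp at hk
  | cons a v ih =>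
    intro i hocc
    have hu1 := u_sigma1 h i
    have hcons : phiBL (a :: v) ++ [false]
        = (if a then [false, true] else [false]) ++ (phiBL v ++ [false]) := by
      rw [phiBL_cons, List.append_assoc]
    have hai : u' i = a := by
      have h1 := hocc 1 (by cases a <;> simp [phiBL_cons])
      rw [hu1] at h1
      cases a with
      | true =>
        rw [show (phiBL (true :: v) ++ [false]).getD 1 false = true from rfl] at h1
        exact h1.symm
      | false =>
        rw [show (phiBL (false :: v) ++ [false]).getD 1 false
            = (phiBL v ++ [false]).getD 0 false from rfl, first_false] at h1
        exact h1.symm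
    have hc : σf u' (i + 1) = σf u' i + (if a then 2 else 1) := by
      rw [sigma_succ, hai]
    have hlenif : (if a then [false, true] else [false]).length = (if a then 2 else 1) := by
      cases a <;> rfl
    have htail : Occ v u' (i + 1) := by
      apply ih
      intro k hk
      have hlen : (if a then 2 else 1) + k < (phiBL (a :: v) ++ [false]).length := by
        rw [hcons, List.length_append, hlenif]
        omega
      have h2 := hocc ((if a then 2 else 1) + k) hlen
      rw [hcons, List.getD_append_right _ _ _ _ (by rw [hlenif]; omega)] at h2
      rw [hlenif, Nat.add_sub_cancel_left] at h2
      rw [h2, hc]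
      ring_nf
    intro k hk
    cases k with
    | zero => simpa using hai.symm
    | succ k' =>
      have := htail k' (by simpa using hk)
      simp only [List.getD_cons_succ]
      rw [this]
      congr 1
      omega

lemma occ_iff {u u' : ℕ → Bool} (h : PhibImage u u') {w' : List Bool} {p : ℕ} :
    Occ (phiBL w' ++ [false]) u p ↔ ∃ i, σf u' i = p ∧ Occ w' u' i := by
  constructor
  · intro hocc
    have hp0 : u p = false := by
      have h0 := hocc 0 (by simp)
      rw [first_false] at h0
      simpa using h0.symm
    obtain ⟨i, hi⟩ := eq_sigma_of_false h hp0
    subst hi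
    exact ⟨i, rfl, occ_preimage h w' i hocc⟩
  · rintro ⟨i, rfl, hocc⟩
    exact occ_image h hocc

end PhibAux

/-- Derivated words are preserved under φ_b: if `u = φ_b(u')`, `w'` is a nonempty prefix
of `u'` with exactly two return words `r0', r1'` and derivated word `d`, then the return
words to `w = φ_b(w')0` in `u` are exactly `φ_b(r0')` and `φ_b(r1')` and the derivated
word of `u` with respect to `w` is again `d` (with the same coding). -/
theorem derivated_of_phib_image (u u' : ℕ → Bool) (h : PhibImage u u')
    (w' r0' r1' : List Bool) (d : ℕ → Bool)
    (hw'ne : w' ≠ []) (hw'pref : Occ w' u' 0)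
    (hrec : ∀ m, ∃ i, m < i ∧ Occ w' u' i)
    (hne : r0' ≠ r1')
    (hr0 : IsReturnWord r0' w' u') (hr1 : IsReturnWord r1' w' u')
    (honly : ∀ r, IsReturnWord r w' u' → r = r0' ∨ r = r1')
    (hd : DerivatedWith u' w' r0' r1' d) :
    (∀ r, IsReturnWord r (phiBL w' ++ [false]) u ↔ (r = phiBL r0' ∨ r = phiBL r1')) ∧
      DerivatedWith u (phiBL w' ++ [false]) (phiBL r0') (phiBL r1') d := by
  obtain ⟨o', ho0, homono, hocc', hsurj', hblk'⟩ := hd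
  have hsm := PhibAux.sigma_mono u'
  constructor
  · intro r
    constructor
    · rintro ⟨p, q, hpq, hop, hoq, hbet, rfl⟩
      obtain ⟨i, rfl, hoi⟩ := (PhibAux.occ_iff h).mp hop
      obtain ⟨j, rfl, hoj⟩ := (PhibAux.occ_iff h).mp hoq
      have hij : i < j := hsm.lt_iff_lt.mp hpq
      have hbet' : ∀ m, i < m → m < j → ¬ Occ w' u' m := by
        intro m h1 h2 hm
        exact hbet (PhibAux.σf u' m) (hsm h1) (hsm h2) (PhibAux.occ_image h hm)
      have hret : IsReturnWord ((List.range (j - i)).map fun k => u' (i + k)) w' u' :=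
        ⟨i, j, hij, hoi, hoj, hbet', rfl⟩
      have hb := PhibAux.block_list' h i j (le_of_lt hij)
      rcases honly _ hret with he | he
      · left; rw [hb, he]
      · right; rw [hb, he]
    · intro hcase
      have key : ∀ r', IsReturnWord r' w' u' → IsReturnWord (phiBL r') (phiBL w' ++ [false]) u := by
        rintro r' ⟨i, j, hij, hoi, hoj, hbet, hre⟩
        refine ⟨PhibAux.σf u' i, PhibAux.σf u' j, hsm hij, PhibAux.occ_image h hoi,
          PhibAux.occ_image h hoj, ?_, ?_⟩
        · intro m h1 h2 hm
          obtain ⟨m', rfl, hom'⟩ := (PhibAux.occ_iff h).mp hm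
          exact hbet m' (hsm.lt_iff_lt.mp h1) (hsm.lt_iff_lt.mp h2) hom'
        · rw [PhibAux.block_list' h i j (le_of_lt hij), hre]
      rcases hcase with rfl | rfl
      · exact key r0' hr0
      · exact key r1' hr1
  · refine ⟨fun n => PhibAux.σf u' (o' n), by simp only [ho0, PhibAux.sigma_zero],
      hsm.comp homono, ?_, ?_, ?_⟩
    · intro n; exact PhibAux.occ_image h (hocc' n)
    · intro m hm
      obtain ⟨i, rfl, hoi⟩ := (PhibAux.occ_iff h).mp hm
      obtain ⟨n, hn⟩ := hsurj' i hoi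
      exact ⟨n, by simp only [hn]⟩
    · intro n
      have hle : o' n ≤ o' (n + 1) := le_of_lt (homono (Nat.lt_succ_self n))
      have hb := PhibAux.block_list' h (o' n) (o' (n + 1)) hle
      rw [hb, hblk' n]
      cases d n <;> simp
end

section
/- Let u be an infinite binary word of the form u = φ_b(u') for some infinite binary word u', where u' is aperiodic and recurrent. Then the return words to the length-1 prefix 0 of u are exactly r_0 = 0 and r_1 = 01, and the derivated word of u with respect to the prefix 0 equals u' (coding r_0 by 0 and r_1 by 1). -/
namespace DerivAux

def pos (u' : ℕ → Bool) (n : ℕ) : ℕ := (phiBL ((List.range n).map u')).length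

lemma phiBL_append (a b : List Bool) : phiBL (a ++ b) = phiBL a ++ phiBL b := by
  simp [phiBL]

lemma prefix_succ (u' : ℕ → Bool) (n : ℕ) :
    phiBL ((List.range (n+1)).map u') =
      phiBL ((List.range n).map u') ++ (if u' n then [false, true] else [false]) := by
  rw [List.range_succ, List.map_append, phiBL_append]
  cases hn : u' n <;> simp [phiBL, hn]

lemma pos_zero (u' : ℕ → Bool) : pos u' 0 = 0 := by simp [pos, phiBL]

lemma pos_succ (u' : ℕ → Bool) (n : ℕ) :
    pos u' (n+1) = pos u' n + (if u' n then 2 else 1) := by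
  unfold pos
  rw [prefix_succ]
  cases u' n <;> simp

lemma pos_mono (u' : ℕ → Bool) : StrictMono (pos u') := by
  apply strictMono_nat_of_lt_succ
  intro n
  rw [pos_succ]
  cases u' n <;> simp

variable {u u' : ℕ → Bool} (h : PhibImage u u')

include h

lemma u_pos (n : ℕ) : u (pos u' n) = false := by
  have hlt : pos u' n < pos u' (n+1) := pos_mono u' (Nat.lt_succ_self n)
  have hthis := h (n+1) (pos u' n) hlt
  rw [prefix_succ] at hthis
  have e : pos u' n = (phiBL ((List.range n).map u')).length := rfl
  rw [← hthis, e, List.getD_append_right _ _ _ _ (le_refl _), Nat.sub_self]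
  cases u' n <;> rfl

lemma u_pos1 (n : ℕ) (hn : u' n = true) : u (pos u' n + 1) = true := by
  have hlt : pos u' n + 1 < pos u' (n+1) := by rw [pos_succ, hn]; simp
  have hthis := h (n+1) (pos u' n + 1) hlt
  rw [prefix_succ] at hthis
  have e : pos u' n = (phiBL ((List.range n).map u')).length := rfl
  rw [← hthis, e, List.getD_append_right _ _ _ _ (Nat.le_add_right _ _),
    Nat.add_sub_cancel_left, hn]
  rfl

omit h

lemma pos_cover (k : ℕ) : ∃ n, k = pos u' n ∨ (k = pos u' n + 1 ∧ u' n = true) := by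
  induction k with
  | zero => exact ⟨0, Or.inl (pos_zero u').symm⟩
  | succ k ih =>
    obtain ⟨n, hk⟩ := ih
    rcases hk with hk | ⟨hk, hn⟩
    · cases hn : u' n with
      | false => exact ⟨n+1, Or.inl (by rw [pos_succ, hn, hk]; simp)⟩
      | true => exact ⟨n, Or.inr ⟨by rw [hk], hn⟩⟩
    · refine ⟨n+1, Or.inl ?_⟩
      rw [pos_succ, hn, hk]; simp

include h

lemma occ_iff (m : ℕ) : Occ [false] u m ↔ ∃ n, pos u' n = m := by
  constructor
  · intro hocc
    have hm : u m = false := ((hocc 0 (by simp)).symm : u (m + 0) = false)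
    obtain ⟨n, hn | ⟨hn, hn'⟩⟩ := pos_cover (u' := u') m
    · exact ⟨n, hn.symm⟩
    · rw [hn, u_pos1 h n hn'] at hm; simp at hm
  · rintro ⟨n, rfl⟩
    intro k hk
    have hk0 : k = 0 := by simp at hk; omega
    subst hk0
    simpa using (u_pos h n).symm

lemma block (n : ℕ) :
    ((List.range (pos u' (n + 1) - pos u' n)).map fun k => u (pos u' n + k)) =
      if u' n then [false, true] else [false] := by
  cases hn : u' n with
  | false =>
    have hd : pos u' (n+1) - pos u' n = 1 := by rw [pos_succ, hn]; simp
    rw [hd]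
    simp [List.range_succ, u_pos h n]
  | true =>
    have hd : pos u' (n+1) - pos u' n = 2 := by rw [pos_succ, hn]; simp
    rw [hd]
    simp [List.range_succ, u_pos h n, u_pos1 h n hn]

end DerivAux

/-- If `u = φ_b(u')` with `u'` aperiodic and recurrent, then the return words to the
prefix `0` of `u` are exactly `0` and `01`, and the derivated word of `u` with respect
to `0` is `u'` itself (coding `0` by `false` and `01` by `true`). -/
theorem derivated_of_first_letter (u u' : ℕ → Bool) (h : PhibImage u u')
    (haper : ¬ ∃ m p : ℕ, 0 < p ∧ ∀ n, m ≤ n → u' (n + p) = u' n)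
    (hrec : ∀ n m : ℕ, ∃ i, m ≤ i ∧ Occ ((List.range n).map u') u' i) :
    (∀ r, IsReturnWord r [false] u ↔ (r = [false] ∨ r = [false, true])) ∧
      DerivatedWith u [false] [false] [false, true] u' := by
  have hfalse : ∃ n, u' n = false := by
    by_contra hc
    push_neg at hc
    simp only [Bool.not_eq_false] at hc
    exact haper ⟨0, 1, Nat.one_pos, fun n _ => by rw [hc, hc]⟩
  have htrue : ∃ n, u' n = true := by
    by_contra hc
    push_neg at hc
    simp only [Bool.not_eq_true] at hc
    exact haper ⟨0, 1, Nat.one_pos, fun n _ => by rw [hc, hc]⟩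
  constructor
  · intro r
    constructor
    · rintro ⟨i, j, hij, hi, hj, hbetween, rfl⟩
      obtain ⟨n, rfl⟩ := (DerivAux.occ_iff h i).1 hi
      obtain ⟨m, rfl⟩ := (DerivAux.occ_iff h j).1 hj
      have hnm : n < m := (DerivAux.pos_mono u').lt_iff_lt.1 hij
      have hm : m = n + 1 := by
        rcases Nat.lt_or_ge (n+1) m with h1 | h2
        · exact absurd ((DerivAux.occ_iff h _).2 ⟨n+1, rfl⟩)
            (hbetween _ (DerivAux.pos_mono u' (Nat.lt_succ_self n))
              (DerivAux.pos_mono u' h1))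
        · omega
      subst hm
      rw [DerivAux.block h n]
      cases u' n
      · left; simp
      · right; simp
    · rintro (rfl | rfl)
      · obtain ⟨n, hn⟩ := hfalse
        refine ⟨DerivAux.pos u' n, DerivAux.pos u' (n+1),
          DerivAux.pos_mono u' (Nat.lt_succ_self n),
          (DerivAux.occ_iff h _).2 ⟨n, rfl⟩, (DerivAux.occ_iff h _).2 ⟨n+1, rfl⟩,
          ?_, ?_⟩
        · intro m h1 h2 _
          rw [DerivAux.pos_succ, hn] at h2
          simp at h2
          omega
        · rw [DerivAux.block h n, hn]
          simp
      · obtain ⟨n, hn⟩ := htrue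
        refine ⟨DerivAux.pos u' n, DerivAux.pos u' (n+1),
          DerivAux.pos_mono u' (Nat.lt_succ_self n),
          (DerivAux.occ_iff h _).2 ⟨n, rfl⟩, (DerivAux.occ_iff h _).2 ⟨n+1, rfl⟩,
          ?_, ?_⟩
        · intro m h1 h2 hocc
          rw [DerivAux.pos_succ, hn] at h2
          simp at h2
          have hm : m = DerivAux.pos u' n + 1 := by omega
          have hv := hocc 0 (by simp)
          rw [hm] at hv
          simp [DerivAux.u_pos1 h n hn] at hv
        · rw [DerivAux.block h n, hn]
          simp
  · exact ⟨DerivAux.pos u', DerivAux.pos_zero u', DerivAux.pos_mono u',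
      fun n => (DerivAux.occ_iff h _).2 ⟨n, rfl⟩,
      fun m hm => (DerivAux.occ_iff h m).1 hm,
      fun n => DerivAux.block h n⟩
end

section
/- Let F be the involution on letters of {b,β} given by F(b)=β, F(β)=b, extended letterwise to words. Let w ∈ {b,β}* be nonempty and suppose w is not of the form (uF(u))^k for any nonempty word u and k ≥ 1. Then for all 0 ≤ t < s ≤ |w|−1, the cyclic shifts satisfy cyc^s(w) ≠ F(cyc^t(w)). -/
/-!
Put `d = s - t`; rotating both sides back by `t` gives `cyc^d(w) = F(w)`, hence
`cyc^(d * a)(w) = F^a(w)` for every `a`. By Bézout, `g = gcd(d, |w|)` is congruent to a multiple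
`d * a` modulo `|w|`, so `cyc^g(w) = F^a(w)`. If `a` were even, `g` and therefore `d` would be a
period of `w`, contradicting `cyc^d(w) = F(w) ≠ w`; so `cyc^g(w) = F(w)`. Writing `|w| = g * m`,
`w = cyc^|w|(w) = F^m(w)` forces `m` to be even, and then `w = (uF(u))^(m/2)` with `u` the prefix
of length `g`.
-/

namespace List

variable {α : Type*}

theorem rotate_sub_eq_map_of_rotate_eq_map_rotate {l : List α} {φ : α → α} {s t : ℕ}
    (hts : t ≤ s) (h : l.rotate s = (l.rotate t).map φ) : l.rotate (s - t) = l.map φ := by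
  rwa [← Nat.sub_add_cancel hts, ← rotate_rotate, map_rotate, rotate_eq_rotate] at h

theorem rotate_mul_eq_map_iterate {l : List α} {φ : α → α} {d : ℕ}
    (h : l.rotate d = l.map φ) (a : ℕ) : l.rotate (d * a) = l.map φ^[a] := by
  induction a with
  | zero => simp
  | succ a ih =>
    rw [Nat.mul_succ, ← rotate_rotate, ih, ← map_rotate, h, map_map, Function.iterate_succ]

theorem exists_rotate_gcd_eq_map_iterate {l : List α} {φ : α → α} {d : ℕ}
    (h : l.rotate d = l.map φ) : ∃ a, l.rotate (d.gcd l.length) = l.map φ^[a] := by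
  rcases lt_or_ge (d.gcd l.length) l.length with hlt | hge
  · obtain ⟨a, -, ha⟩ := Nat.exists_mul_mod_eq_gcd hlt
    exact ⟨a, by rw [← ha, rotate_mod, rotate_mul_eq_map_iterate h]⟩
  · refine ⟨0, ?_⟩
    rcases l with _ | ⟨x, l⟩
    · simp
    · rw [le_antisymm (Nat.gcd_le_right _ (by simp)) hge, rotate_length, Function.iterate_zero,
        map_id]

theorem take_mul_eq_flatten_replicate_of_rotate_eq {l : List α} {m : ℕ} (h : l.rotate m = l)
    {j : ℕ} (hj : j * m ≤ l.length) : l.take (j * m) = (replicate j (l.take m)).flatten := by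
  induction j with
  | zero => simp
  | succ j ih =>
    rw [Nat.succ_mul] at hj
    have hdrop : l.drop m = l.take (l.length - m) := by
      have := congrArg (take (l.length - m))
        (rotate_eq_drop_append_take (l := l) (n := m) (by omega))
      rwa [h, take_left' (by simp), eq_comm] at this
    rw [Nat.succ_mul, Nat.add_comm, take_add, hdrop, take_take, min_eq_left (by omega),
      ih (by omega), replicate_succ, flatten_cons]

theorem eq_flatten_replicate_of_rotate_eq_map {l : List α} {φ : α → α}
    (hφ : Function.Involutive φ) {r k : ℕ} (h : l.rotate r = l.map φ)
    (hl : l.length = k * (2 * r)) :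
    l = (replicate k (l.take r ++ (l.take r).map φ)).flatten := by
  have hperiod : l.rotate (2 * r) = l := by
    rw [Nat.mul_comm, rotate_mul_eq_map_iterate h, Function.involutive_iff_iter_2_eq_id.1 hφ,
      map_id]
  have hprefix : l.take (2 * r) = l.take r ++ (l.take r).map φ := by
    rcases Nat.eq_zero_or_pos k with rfl | hk
    · simp_all
    have hr : 2 * r ≤ l.length := hl ▸ Nat.le_mul_of_pos_left _ hk
    rw [Nat.two_mul, take_add, map_take, ← h, rotate_eq_drop_append_take (by omega),
      take_append_of_le_length (by simp; omega)]
  calc l = l.take (k * (2 * r)) := by rw [← hl, take_length]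
    _ = _ := by rw [take_mul_eq_flatten_replicate_of_rotate_eq hperiod hl.ge, hprefix]

theorem map_not_ne_self {w : List Bool} (hw : w ≠ []) : w.map not ≠ w := by
  obtain ⟨b, w, rfl⟩ := exists_cons_of_ne_nil hw
  simp

theorem exists_eq_flatten_replicate_of_rotate_eq_map_not {w : List Bool} (hw : w ≠ []) {d : ℕ}
    (h : w.rotate d = w.map not) :
    ∃ u k, u ≠ [] ∧ 1 ≤ k ∧ w = (replicate k (u ++ u.map not)).flatten := by
  set g := d.gcd w.length
  obtain ⟨a, ha⟩ := exists_rotate_gcd_eq_map_iterate h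
  have hodd : Odd a := by
    by_contra heven
    rw [Nat.not_odd_iff_even] at heven
    rw [Bool.involutive_not.iterate_even heven] at ha
    obtain ⟨c, hc⟩ : g ∣ d := Nat.gcd_dvd_left _ _
    apply map_not_ne_self hw
    rw [← h, hc, rotate_mul_eq_map_iterate ha, Function.iterate_id, map_id]
  rw [Bool.involutive_not.iterate_odd hodd] at ha
  obtain ⟨m, hm⟩ : g ∣ w.length := Nat.gcd_dvd_right _ _
  have hm_even : Even m := by
    by_contra hm_odd
    rw [Nat.not_even_iff_odd] at hm_odd
    apply map_not_ne_self hw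
    rw [← Bool.involutive_not.iterate_odd hm_odd, ← rotate_mul_eq_map_iterate ha, ← hm,
      rotate_length]
  obtain ⟨k, rfl⟩ := hm_even
  have hlen : w.length = k * (2 * g) := by rw [hm]; ring
  have hg : 0 < g := Nat.gcd_pos_of_pos_right _ (length_pos_iff.2 hw)
  refine ⟨w.take g, k, ?_, ?_,
    eq_flatten_replicate_of_rotate_eq_map Bool.involutive_not ha hlen⟩
  · simpa [take_eq_nil_iff, hw] using hg.ne'
  · exact Nat.pos_of_ne_zero (by rintro rfl; simp_all)

end List

/-- Over the two-letter alphabet {b, β} (encoded as `Bool`, with F the exchange of the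
two letters extended letterwise, i.e. `List.map (!·)`): if a nonempty word w is not of
the form (u F(u))^k with u nonempty and k ≥ 1, then no cyclic shift cyc^s(w) equals the
F-image of a cyclic shift cyc^t(w) for 0 ≤ t < s ≤ |w|−1. -/
theorem cyclic_shift_ne_F_image (w : List Bool) (hw : w ≠ [])
    (hpow : ∀ (u : List Bool) (k : ℕ), u ≠ [] → 1 ≤ k →
      w ≠ (List.replicate k (u ++ u.map fun x => !x)).flatten) :
    ∀ t s, t < s → s ≤ w.length - 1 → w.rotate s ≠ (w.rotate t).map fun x => !x := by
  intro t s hts _ h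
  obtain ⟨u, k, hu, hk, hw_eq⟩ := List.exists_eq_flatten_replicate_of_rotate_eq_map_not hw
    (List.rotate_sub_eq_map_of_rotate_eq_map_rotate hts.le h)
  exact hpow u k hu hk hw_eq
end

section
/- Let F be the involution on {b,β} with F(b)=β, F(β)=b extended letterwise to words, and let w ∈ {b,β}* be nonempty with w ≠ (uF(u))^ℓ u for every nonempty word u and every ℓ ≥ 1, and w not a nontrivial power and not of the form (uF(u))^k for k ≥ 1. Define cyc_F(w_0 w_1 ⋯ w_{n-1}) = w_1 ⋯ w_{n-1} F(w_0). Then the words cyc_F^0(w), cyc_F^1(w), …, cyc_F^{|w|-1}(w) are pairwise distinct and no one of them equals the F-image of another. -/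
/-- The F-twisted cyclic shift: cyc_F(w₀w₁⋯w_{n-1}) = w₁⋯w_{n-1} F(w₀), over the
alphabet {b, β} encoded as `Bool` with F(x) = !x. -/
def cycF : List Bool → List Bool
  | [] => []
  | x :: xs => xs ++ [!x]

lemma cycF_length (l : List Bool) : (cycF l).length = l.length := by
  cases l <;> simp [cycF]

lemma cycF_iter_length (k : ℕ) (l : List Bool) : (cycF^[k] l).length = l.length := by
  induction k generalizing l with
  | zero => rfl
  | succ k ih => rw [Function.iterate_succ_apply, ih, cycF_length]

lemma cycF_inj : Function.Injective cycF := by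
  intro a b h
  match a, b with
  | [], [] => rfl
  | [], y :: ys => simp [cycF] at h
  | x :: xs, [] => simp [cycF] at h
  | x :: xs, y :: ys =>
    simp only [cycF] at h
    rcases List.append_inj' h (by simp) with ⟨h1, h2⟩
    simp at h2
    rw [h1, h2]

lemma cycF_map_not (l : List Bool) : cycF (l.map not) = (cycF l).map not := by
  cases l <;> simp [cycF]

lemma cycF_iter_map_not (k : ℕ) (l : List Bool) :
    cycF^[k] (l.map not) = (cycF^[k] l).map not := by
  induction k generalizing l with
  | zero => rfl
  | succ k ih => rw [Function.iterate_succ_apply, Function.iterate_succ_apply, cycF_map_not, ih]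

lemma cycF_iter_eq (l : List Bool) : ∀ m, m ≤ l.length →
    cycF^[m] l = l.drop m ++ (l.take m).map not := by
  intro m
  induction m with
  | zero => simp
  | succ m ih =>
    intro h
    have hm : m < l.length := lt_of_lt_of_le (Nat.lt_succ_self m) h
    rw [Function.iterate_succ_apply', ih hm.le, List.drop_eq_getElem_cons hm,
      List.cons_append]
    show (l.drop (m+1) ++ (l.take m).map not) ++ [!l[m]] = _
    rw [List.append_assoc]
    congr 1
    rw [List.take_succ, List.getElem?_eq_getElem hm]
    simp only [Option.toList_some, List.map_append, List.map_cons, List.map_nil]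

lemma cycF_full (l : List Bool) : cycF^[l.length] l = l.map not := by
  rw [cycF_iter_eq l l.length le_rfl]; simp

lemma headI_cycF (l : List Bool) (j : ℕ) (h : j < l.length) :
    (cycF^[j] l).headI = l.getD j false := by
  rw [cycF_iter_eq l j h.le, List.drop_eq_getElem_cons h, List.cons_append,
    List.headI_cons, List.getD_eq_getElem l false h]

def PerX (x : ℕ → Bool) (j : ℕ) (ε : Bool) : Prop := ∀ i, x (i + j) = xor ε (x i)

lemma PerX.add {x : ℕ → Bool} {j k : ℕ} {ε ε' : Bool} (h : PerX x j ε) (h' : PerX x k ε') :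
    PerX x (j + k) (xor ε ε') := by
  intro i
  have h1 : x (i + k + j) = xor ε (x (i + k)) := h (i + k)
  rw [h' i] at h1
  have e : i + (j + k) = i + k + j := by omega
  rw [e, h1]
  cases ε <;> cases ε' <;> cases x i <;> rfl

lemma PerX.sub {x : ℕ → Bool} {j k : ℕ} {ε ε'' : Bool} (h : PerX x j ε)
    (h' : PerX x (j + k) ε'') : PerX x k (xor ε ε'') := by
  intro i
  have h1 : x (i + k + j) = xor ε (x (i + k)) := h (i + k)
  have e : i + k + j = i + (j + k) := by omega
  rw [e, h' i] at h1
  cases ε <;> cases ε'' <;> cases hx : x i <;> simp [hx] at h1 ⊢ <;> simp [h1]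

lemma PerX.mul {x : ℕ → Bool} {j : ℕ} {ε : Bool} (h : PerX x j ε) (q : ℕ) :
    PerX x (q * j) (ε && decide (q % 2 = 1)) := by
  induction q with
  | zero => intro i; simp
  | succ q ih =>
    have key := ih.add h
    have heq : q * j + j = (q + 1) * j := by ring
    rw [heq] at key
    have : (xor (ε && decide (q % 2 = 1)) ε) = (ε && decide ((q + 1) % 2 = 1)) := by
      rcases Nat.mod_two_eq_zero_or_one q with h2 | h2
      · have h3 : (q + 1) % 2 = 1 := by omega
        simp [h2, h3]
      · have h3 : (q + 1) % 2 = 0 := by omega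
        simp [h2, h3]
    rwa [this] at key

lemma PerX.unique {x : ℕ → Bool} {j : ℕ} {ε ε' : Bool} (h : PerX x j ε) (h' : PerX x j ε') :
    ε = ε' := by
  have := (h 0).symm.trans (h' 0)
  cases ε <;> cases ε' <;> cases hx : x 0 <;> simp [hx] at this ⊢

lemma PerX.gcd {x : ℕ → Bool} : ∀ a b εa εb, PerX x a εa → PerX x b εb →
    ∃ ε, PerX x (Nat.gcd a b) ε := by
  intro a
  induction a using Nat.strong_induction_on with
  | _ a ih =>
    intro b εa εb ha hb
    rcases Nat.eq_zero_or_pos a with h0 | h0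
    · subst h0
      exact ⟨εb, by rwa [Nat.gcd_zero_left]⟩
    · rw [Nat.gcd_rec]
      have hmod : a * (b / a) + b % a = b := Nat.div_add_mod b a
      have h1 : PerX x (a * (b / a)) (εa && decide ((b / a) % 2 = 1)) := by
        have := ha.mul (b / a)
        rwa [Nat.mul_comm] at this
      have h2 : PerX x (b % a) (xor (εa && decide ((b / a) % 2 = 1)) εb) :=
        h1.sub (by rwa [hmod])
      exact ih (b % a) (Nat.mod_lt _ h0) a _ εa h2 ha

lemma buildWord : ∀ (ℓ : ℕ) (u w : List Bool), u ≠ [] →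
    w.length = (2 * ℓ + 1) * u.length →
    (∀ i, i < w.length →
      w.getD i false = xor (decide ((i / u.length) % 2 = 1)) (u.getD (i % u.length) false)) →
    w = (List.replicate ℓ (u ++ u.map not)).flatten ++ u := by
  intro ℓ
  induction ℓ with
  | zero =>
    intro u w hu hlen hval
    simp only [List.replicate_zero, List.flatten_nil, List.nil_append]
    have hl : w.length = u.length := by simpa using hlen
    apply List.ext_getElem hl
    intro i hi1 hi2
    have := hval i hi1
    rw [Nat.div_eq_of_lt hi2, Nat.mod_eq_of_lt hi2, List.getD_eq_getElem w false hi1,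
      List.getD_eq_getElem u false hi2] at this
    simpa using this
  | succ ℓ ih =>
    intro u w hu hlen hval
    have hd : 0 < u.length := List.length_pos_iff.mpr hu
    set d := u.length with hdd
    have hlen' : w.length = 2 * ℓ * d + 3 * d := by rw [hlen]; ring
    have hw2d : 2 * d ≤ w.length := by omega
    have h1 : w.take (2 * d) = u ++ u.map not := by
      apply List.ext_getElem
        (by rw [List.length_take, List.length_append, List.length_map]; omega)
      intro i hi1 hi2
      have hi2d : i < 2 * d := by rw [List.length_take] at hi1; omega
      have hiw : i < w.length := by omega
      rw [List.getElem_take]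
      have := hval i hiw
      rw [List.getD_eq_getElem w false hiw] at this
      rw [this]
      rcases Nat.lt_or_ge i d with hid | hid
      · rw [List.getElem_append_left (by rw [← hdd]; omega)]
        rw [Nat.div_eq_of_lt hid, Nat.mod_eq_of_lt hid,
          List.getD_eq_getElem u false hid]
        simp
      · rw [List.getElem_append_right (by rw [← hdd]; omega)]
        have hq : i / d = 1 := Nat.div_eq_of_lt_le (by omega) (by omega)
        have hr : i % d = i - d := by
          rw [Nat.mod_eq_sub_mod (by omega), Nat.mod_eq_of_lt (by omega)]
        rw [hq, hr, List.getElem_map,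
          List.getD_eq_getElem u false (show i - d < d by omega)]
        simp [← hdd]
    have h2 : w.drop (2 * d) = (List.replicate ℓ (u ++ u.map not)).flatten ++ u := by
      apply ih u _ hu
      · rw [List.length_drop, ← hdd]
        have e : (2 * ℓ + 1) * d = 2 * ℓ * d + d := by ring
        omega
      · intro i hi
        rw [List.length_drop] at hi
        have hilen : 2 * d + i < w.length := by omega
        have hget : (w.drop (2 * d)).getD i false = w.getD (2 * d + i) false := by
          rw [List.getD_eq_getElem _ false (by rw [List.length_drop]; omega),
            List.getD_eq_getElem w false hilen, List.getElem_drop]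
        rw [hget, hval (2 * d + i) hilen]
        have e1 : (2 * d + i) / d = i / d + 2 := by
          rw [show 2 * d + i = i + d * 2 by ring, Nat.add_mul_div_left _ _ hd]
        have e2 : (2 * d + i) % d = i % d := by
          rw [show 2 * d + i = i + d * 2 by ring, Nat.add_mul_mod_self_left]
        rw [e1, e2, ← hdd, Nat.add_mod_right]
    calc w = w.take (2 * d) ++ w.drop (2 * d) := (List.take_append_drop _ _).symm
      _ = (u ++ u.map not) ++ ((List.replicate ℓ (u ++ u.map not)).flatten ++ u) := by
          rw [h1, h2]
      _ = (List.replicate (ℓ + 1) (u ++ u.map not)).flatten ++ u := by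
          simp [List.replicate_succ, List.append_assoc]

/-- If the nonempty word w over {b, β} satisfies w ≠ (u F(u))^ℓ u for all nonempty u and
ℓ ≥ 1, is not a nontrivial power, and is not of the form (u F(u))^k for k ≥ 1, then the
words cyc_F^k(w), 0 ≤ k ≤ |w|−1, are pairwise distinct and none equals the F-image of
another. -/
theorem twisted_cyclic_shifts_distinct (w : List Bool) (hw : w ≠ [])
    (h1 : ∀ (u : List Bool) (ℓ : ℕ), u ≠ [] → 1 ≤ ℓ →
      w ≠ (List.replicate ℓ (u ++ u.map fun x => !x)).flatten ++ u)
    (h2 : ∀ (u : List Bool) (ℓ : ℕ), 2 ≤ ℓ → w ≠ (List.replicate ℓ u).flatten)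
    (h3 : ∀ (u : List Bool) (k : ℕ), u ≠ [] → 1 ≤ k →
      w ≠ (List.replicate k (u ++ u.map fun x => !x)).flatten) :
    ∀ s t, s < w.length → t < w.length → s ≠ t →
      cycF^[s] w ≠ cycF^[t] w ∧ cycF^[s] w ≠ (cycF^[t] w).map fun x => !x := by
  have hn : 0 < w.length := List.length_pos_iff.mpr hw
  have key : ∀ m, 0 < m → m < w.length → cycF^[m] w ≠ w := by
    intro m hm1 hm2 heq
    set x : ℕ → Bool := fun i => (cycF^[i] w).headI with hxdef
    have hx : ∀ i, i < w.length → x i = w.getD i false := fun i hi => headI_cycF w i hi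
    have Pm : PerX x m false := by
      intro i
      show (cycF^[i + m] w).headI = xor false (cycF^[i] w).headI
      rw [Function.iterate_add_apply, heq, Bool.false_xor]
    have Pn : PerX x w.length true := by
      intro i
      show (cycF^[i + w.length] w).headI = xor true (cycF^[i] w).headI
      rw [Function.iterate_add_apply, cycF_full, cycF_iter_map_not]
      have hne : cycF^[i] w ≠ [] := by
        intro hnil
        have := cycF_iter_length i w
        rw [hnil] at this
        simp at this
        omega
      cases hcw : cycF^[i] w with
      | nil => exact absurd hcw hne
      | cons a l => simp
    obtain ⟨ε, Pd⟩ := PerX.gcd m w.length false true Pm Pn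
    set d := Nat.gcd m w.length with hdd
    have hd : 0 < d := Nat.gcd_pos_of_pos_left _ hm1
    have hdm : d ∣ m := Nat.gcd_dvd_left m w.length
    have hdn : d ∣ w.length := Nat.gcd_dvd_right m w.length
    have hm' : (m / d) * d = m := Nat.div_mul_cancel hdm
    have hn' : (w.length / d) * d = w.length := Nat.div_mul_cancel hdn
    have e1 : (ε && decide ((m / d) % 2 = 1)) = false := by
      have := Pd.mul (m / d)
      rw [hm'] at this
      exact this.unique Pm
    have e2 : (ε && decide ((w.length / d) % 2 = 1)) = true := by
      have := Pd.mul (w.length / d)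
      rw [hn'] at this
      exact this.unique Pn
    rw [Bool.and_eq_true, decide_eq_true_eq] at e2
    obtain ⟨hε, hnodd⟩ := e2
    have hmeven : (m / d) % 2 = 0 := by
      rw [hε, Bool.true_and, decide_eq_false_iff_not] at e1
      omega
    set ℓ := (w.length / d) / 2 with hll
    have hnd : w.length / d = 2 * ℓ + 1 := by omega
    have hl1 : 1 ≤ ℓ := by
      by_contra hc
      have hnd1 : w.length / d = 1 := by omega
      have hwd : w.length = d := by rw [← hn', hnd1, Nat.one_mul]
      have : w.length ≤ m := Nat.le_of_dvd hm1 (hwd ▸ hdm)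
      omega
    set u := w.take d with huu
    have hdn' : d ≤ w.length := Nat.le_of_dvd hn hdn
    have hul : u.length = d := by rw [huu, List.length_take]; omega
    have hu : u ≠ [] := by
      rw [← List.length_pos_iff, hul]
      exact hd
    have Pd' : PerX x d true := hε ▸ Pd
    have step : ∀ q r, r < d → q * d + r < w.length → w.getD (q * d + r) false
        = xor (decide (q % 2 = 1)) (w.getD r false) := by
      intro q
      induction q with
      | zero => intro r hr _; simp
      | succ q ih =>
        intro r hr hlt
        have hmul : (q + 1) * d = q * d + d := by ring
        have hlt' : q * d + r < w.length := by omega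
        have hx1 : x (q * d + r + d) = xor true (x (q * d + r)) := Pd' _
        rw [hx (q * d + r + d) (by omega), hx _ hlt'] at hx1
        have e3 : (q + 1) * d + r = q * d + r + d := by ring
        rw [e3, hx1, ih r hr hlt']
        rcases Nat.mod_two_eq_zero_or_one q with hq2 | hq2
        · have hq3 : (q + 1) % 2 = 1 := by omega
          simp [hq2, hq3]
        · have hq3 : (q + 1) % 2 = 0 := by omega
          simp [hq2, hq3]
    have hval : ∀ i, i < w.length → w.getD i false
        = xor (decide ((i / u.length) % 2 = 1)) (u.getD (i % u.length) false) := by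
      intro i hi
      have hrd : i % d < d := Nat.mod_lt _ hd
      have hi_eq : i / d * d + i % d = d * (i / d) + i % d := by ring
      have hi_eq2 : i / d * d + i % d = i := by rw [hi_eq, Nat.div_add_mod]
      have hstep := step (i / d) (i % d) hrd (by rw [hi_eq2]; exact hi)
      rw [hi_eq2] at hstep
      have hu_get : u.getD (i % d) false = w.getD (i % d) false := by
        rw [huu, List.getD_eq_getElem _ false (by rw [List.length_take]; omega),
          List.getD_eq_getElem w false (by omega), List.getElem_take]
      rw [hul, hu_get]
      exact hstep
    have hwform := buildWord ℓ u w hu (by rw [hul, ← hnd, hn']) hval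
    exact h1 u ℓ hu hl1 hwform
  have cyc2n : cycF^[2 * w.length] w = w := by
    rw [two_mul, Function.iterate_add_apply, cycF_full]
    have hlm : (w.map not).length = w.length := by simp
    rw [← hlm, cycF_full]
    simp [Function.comp_def, Bool.not_not]
  have key2 : ∀ j, 0 < j → j < 2 * w.length → j ≠ w.length → cycF^[j] w ≠ w := by
    intro j hj1 hj2 hjn heq
    rcases Nat.lt_or_ge j w.length with h | h
    · exact key j hj1 h heq
    · have hj3 : w.length < j := lt_of_le_of_ne h (Ne.symm hjn)
      have hc : cycF^[2 * w.length - j] (cycF^[j] w) = cycF^[2 * w.length - j] w := by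
        rw [heq]
      rw [← Function.iterate_add_apply,
        show 2 * w.length - j + j = 2 * w.length by omega, cyc2n] at hc
      exact key (2 * w.length - j) (by omega) (by omega) hc.symm
  intro s t hs ht hst
  constructor
  · intro heq
    rcases Nat.lt_or_ge s t with h | h
    · have hc : cycF^[s] (cycF^[t - s] w) = cycF^[s] w := by
        rw [← Function.iterate_add_apply, show s + (t - s) = t by omega]
        exact heq.symm
      exact key (t - s) (by omega) (by omega) ((cycF_inj.iterate s) hc)
    · have hts : t < s := by omega
      have hc : cycF^[t] (cycF^[s - t] w) = cycF^[t] w := by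
        rw [← Function.iterate_add_apply, show t + (s - t) = s by omega]
        exact heq
      exact key (s - t) (by omega) (by omega) ((cycF_inj.iterate t) hc)
  · intro heq
    have hmap : (cycF^[t] w).map not = cycF^[t + w.length] w := by
      rw [Function.iterate_add_apply, cycF_full, ← cycF_iter_map_not]
    have heq' : cycF^[s] w = cycF^[t + w.length] w := by
      rw [← hmap]
      exact heq
    have hc : cycF^[s] (cycF^[t + w.length - s] w) = cycF^[s] w := by
      rw [← Function.iterate_add_apply,
        show s + (t + w.length - s) = t + w.length by omega]
      exact heq'.symm
    exact key2 (t + w.length - s) (by omega) (by omega) (by omega)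
      ((cycF_inj.iterate s) hc)
end
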